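/- For continuous maps f, g : X → Y and h : W → X, D(f ∘ h, g ∘ h) ≤ D(f, g); moreover if h is a homotopy equivalence then D(f ∘ h, g ∘ h) = D(f, g). -/

import Mathlib

/-!
Pulling an open cover of `X` back along `h` gives an open cover of `W` of the same size on which
`f ∘ h` and `g ∘ h` are still homotopic, so `D(f ∘ h, g ∘ h) ≤ D(f, g)`. The homotopic distance
only depends on the homotopy classes of `f` and `g`, so if `h ∘ k ≃ id` then
`D(f, g) = D(f ∘ h ∘ k, g ∘ h ∘ k) ≤ D(f ∘ h, g ∘ h)`.
-/

/-- Homotopic distance: least `n` such that `X` has an open cover by `n+1` open sets on each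
of which `f` and `g` restrict to homotopic maps; `⊤` if no such cover exists. -/
noncomputable def hDist {X Y : Type*} [TopologicalSpace X] [TopologicalSpace Y]
    (f g : C(X, Y)) : ℕ∞ :=
  sInf {N : ℕ∞ | ∃ n : ℕ, N = n ∧ ∃ U : Fin (n + 1) → Set X,
    (∀ i, IsOpen (U i)) ∧ (∀ x, ∃ i, x ∈ U i) ∧
    ∀ i, (f.restrict (U i)).Homotopic (g.restrict (U i))}

namespace ContinuousMap.Homotopic

variable {X Y : Type*} [TopologicalSpace X] [TopologicalSpace Y]

theorem restrict {f g : C(X, Y)} (hfg : f.Homotopic g) (U : Set X) :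
    (f.restrict U).Homotopic (g.restrict U) :=
  hfg.comp (.refl ((ContinuousMap.id X).restrict U))

end ContinuousMap.Homotopic

section hDist

variable {W X Y : Type*} [TopologicalSpace W] [TopologicalSpace X] [TopologicalSpace Y]

theorem hDist_comp_le (f g : C(X, Y)) (h : C(W, X)) :
    hDist (f.comp h) (g.comp h) ≤ hDist f g := by
  refine sInf_le_sInf ?_
  rintro _ ⟨n, rfl, U, hU, hcover, hhom⟩
  exact ⟨n, rfl, fun i ↦ h ⁻¹' U i, fun i ↦ (hU i).preimage h.continuous, fun x ↦ hcover (h x),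
    fun i ↦ (hhom i).comp (.refl (h.restrictPreimage (U i)))⟩

theorem hDist_le_of_homotopic {f f' g g' : C(X, Y)} (hf : f.Homotopic f')
    (hg : g.Homotopic g') : hDist f' g' ≤ hDist f g := by
  refine sInf_le_sInf ?_
  rintro _ ⟨n, rfl, U, hU, hcover, hhom⟩
  exact ⟨n, rfl, U, hU, hcover,
    fun i ↦ ((hf.restrict (U i)).symm.trans (hhom i)).trans (hg.restrict (U i))⟩

theorem hDist_le_comp_of_homotopic_id {f g : C(X, Y)} {h : C(W, X)} {k : C(X, W)}
    (hk : (h.comp k).Homotopic (ContinuousMap.id X)) :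
    hDist f g ≤ hDist (f.comp h) (g.comp h) :=
  calc hDist f g ≤ hDist ((f.comp h).comp k) ((g.comp h).comp k) :=
        hDist_le_of_homotopic ((ContinuousMap.Homotopic.refl f).comp hk)
          ((ContinuousMap.Homotopic.refl g).comp hk)
    _ ≤ hDist (f.comp h) (g.comp h) := hDist_comp_le _ _ k

end hDist

theorem hDist_comp_right {W X Y : Type*} [TopologicalSpace W] [TopologicalSpace X]
    [TopologicalSpace Y] (f g : C(X, Y)) (h : C(W, X)) :
    hDist (f.comp h) (g.comp h) ≤ hDist f g ∧
      ((∃ k : C(X, W), (h.comp k).Homotopic (ContinuousMap.id X) ∧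
          (k.comp h).Homotopic (ContinuousMap.id W)) →
        hDist (f.comp h) (g.comp h) = hDist f g) :=
  ⟨hDist_comp_le f g h, fun ⟨_, hk, _⟩ ↦
    le_antisymm (hDist_comp_le f g h) (hDist_le_comp_of_homotopic_id hk)⟩
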